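/- If A is a nonterminal of a CFG and G_A is the inner subgrammar generated by the closure of A (all nonterminals reachable from A together with all their rules), then the set of terminal strings derivable from A in G_A equals the set of terminal strings derivable from A in G. -/
import Mathlib


/-- One derivation step using a rule from the rule set `P`: rewrite one occurrence of a
nonterminal `A` by the right-hand side of a rule `(A, α) ∈ P`. -/
def CFGProduces {T N : Type*} (P : Set (N × List (N ⊕ T)))
    (u v : List (N ⊕ T)) : Prop :=
  ∃ A α pre suf, (A, α) ∈ P ∧ u = pre ++ [Sum.inl A] ++ suf ∧ v = pre ++ α ++ suf

/-- Derivability: reflexive-transitive closure of one-step rewriting. -/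
def CFGDerives {T N : Type*} (P : Set (N × List (N ⊕ T))) :
    List (N ⊕ T) → List (N ⊕ T) → Prop :=
  Relation.ReflTransGen (CFGProduces P)

/-- Terminal strings derivable from nonterminal `A` using rules `P`. -/
def CFGLang {T N : Type*} (P : Set (N × List (N ⊕ T))) (A : N) : Set (List T) :=
  {w | CFGDerives P [Sum.inl A] (w.map Sum.inr)}

/-- `A` directly uses `B` (w.r.t. rule set `P`). -/
def CFGStep {T N : Type*} (P : Set (N × List (N ⊕ T))) (A B : N) : Prop :=
  ∃ α, (A, α) ∈ P ∧ Sum.inl B ∈ α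

lemma CFGDerives_mono {T N : Type*} {P Q : Set (N × List (N ⊕ T))} (hPQ : P ⊆ Q)
    {u v : List (N ⊕ T)} (h : CFGDerives P u v) : CFGDerives Q u v := by
  induction h with
  | refl => exact Relation.ReflTransGen.refl
  | tail _ hstep ih =>
    obtain ⟨B, α, pre, suf, hmem, hu, hv⟩ := hstep
    exact ih.tail ⟨B, α, pre, suf, hPQ hmem, hu, hv⟩

lemma CFGProduces_reach {T N : Type*} {P : Set (N × List (N ⊕ T))} {A : N}
    {u v : List (N ⊕ T)} (h : CFGProduces P u v)
    (hu : ∀ B, Sum.inl B ∈ u → Relation.ReflTransGen (CFGStep P) A B) :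
    ∀ B, Sum.inl B ∈ v → Relation.ReflTransGen (CFGStep P) A B := by
  obtain ⟨C, α, pre, suf, hmem, hu', hv⟩ := h
  intro B hB
  subst hu' hv
  simp only [List.mem_append] at hB
  rcases hB with (hB | hB) | hB
  · exact hu B (by simp [hB])
  · exact (hu C (by simp)).tail ⟨α, hmem, hB⟩
  · exact hu B (by simp [hB])

lemma CFGDerives_restrict {T N : Type*} (P : Set (N × List (N ⊕ T))) (A : N)
    {u v : List (N ⊕ T)} (h : CFGDerives P u v)
    (hu : ∀ B, Sum.inl B ∈ u → Relation.ReflTransGen (CFGStep P) A B) :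
    CFGDerives {r ∈ P | Relation.ReflTransGen (CFGStep P) A r.1} u v := by
  induction h using Relation.ReflTransGen.head_induction_on with
  | refl => exact Relation.ReflTransGen.refl
  | head hstep _ ih =>
    rename_i a c _
    obtain ⟨C, α, pre, suf, hmem, hu', hv⟩ := hstep
    refine Relation.ReflTransGen.head
      ⟨C, α, pre, suf, ⟨hmem, hu C (by simp [hu'])⟩, hu', hv⟩ ?_
    exact ih (CFGProduces_reach ⟨C, α, pre, suf, hmem, hu', hv⟩ hu)

/-- The inner subgrammar `G_A`, keeping exactly the rules whose left-hand side is
reachable from `A`, derives from `A` exactly the same terminal strings as the full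
grammar: `L_{G_A}(A) = L_G(A)`. -/
theorem inner_subgrammar_same_language {T N : Type*}
    (P : Set (N × List (N ⊕ T))) (A : N) :
    CFGLang {r ∈ P | Relation.ReflTransGen (CFGStep P) A r.1} A = CFGLang P A := by
  ext w
  constructor
  · intro h
    exact CFGDerives_mono (fun r hr => hr.1) h
  · intro h
    exact CFGDerives_restrict P A h (fun B hB => by
      simp at hB; subst hB; exact Relation.ReflTransGen.refl)
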